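/- Let ρ ∈ (0, 1], a, b ∈ ℝ, and let X, Z be independent standard Gaussian random variables. Then P(X ≤ a and ρX + √(1−ρ²)·Z > b) ≤ √(1−ρ²) + |a|·(1−ρ)/ρ + |b−a|/ρ, and the same bound holds for P(X > a and ρX + √(1−ρ²)·Z ≤ b). -/

import Mathlib

open MeasureTheory ProbabilityTheory
open Real Set Filter
open scoped NNReal ENNReal Topology

lemma gpdf_le (x : ℝ) : gaussianPDF 0 1 x ≤ ENNReal.ofReal (1/2) := by
  rw [gaussianPDF]
  apply ENNReal.ofReal_le_ofReal
  rw [gaussianPDFReal]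
  have h2 : (2:ℝ) ≤ Real.sqrt (2 * π * ((1:ℝ≥0):ℝ)) := by
    rw [show (((1:ℝ≥0)):ℝ) = 1 by norm_num, mul_one]
    rw [Real.le_sqrt' (by norm_num)]
    nlinarith [Real.pi_gt_three]
  have h3 : (Real.sqrt (2 * π * ((1:ℝ≥0):ℝ)))⁻¹ ≤ 1/2 := by
    rw [one_div]
    exact inv_anti₀ (by norm_num) h2
  have h4 : rexp (-(x - 0)^2 / (2 * ((1:ℝ≥0):ℝ))) ≤ 1 := by
    rw [Real.exp_le_one_iff]
    have h5 : (0:ℝ) ≤ (x-0)^2 := sq_nonneg _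
    have h6 : ((1:ℝ≥0):ℝ) = 1 := by norm_num
    rw [h6]
    nlinarith
  calc (Real.sqrt (2 * π * ((1:ℝ≥0):ℝ)))⁻¹ * rexp (-(x - 0)^2 / (2 * ((1:ℝ≥0):ℝ)))
      ≤ (1/2) * 1 := mul_le_mul h3 h4 (Real.exp_pos _).le (by norm_num)
    _ = 1/2 := by ring

lemma gauss_Ioc (u v : ℝ) : gaussianReal 0 1 (Set.Ioc u v) ≤ ENNReal.ofReal ((v - u)/2) := by
  rw [gaussianReal_apply 0 one_ne_zero]
  calc ∫⁻ x in Set.Ioc u v, gaussianPDF 0 1 x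
      ≤ ∫⁻ _ in Set.Ioc u v, ENNReal.ofReal (1/2) := lintegral_mono (fun x => gpdf_le x)
    _ = ENNReal.ofReal (1/2) * volume (Set.Ioc u v) := by rw [setLIntegral_const]
    _ = ENNReal.ofReal (1/2) * ENNReal.ofReal (v - u) := by rw [Real.volume_Ioc]
    _ = ENNReal.ofReal ((v - u)/2) := by
        rw [← ENNReal.ofReal_mul (by norm_num)]; congr 1; ring

lemma gauss_neg : (gaussianReal 0 1).map (fun x => -x) = gaussianReal 0 1 := by
  have h := gaussianReal_map_const_mul (μ := 0) (v := 1) (-1)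
  have h2 : (fun x : ℝ => -x) = ((-1 : ℝ) * ·) := by funext x; simp
  rw [h2, h]
  norm_num




lemma gauss_Ioi : gaussianReal 0 1 (Set.Ioi 0) ≤ ENNReal.ofReal (1/2) := by
  set m := gaussianReal 0 1 (Set.Ioi 0) with hm
  have hIic : gaussianReal 0 1 (Set.Iic 0) = gaussianReal 0 1 (Set.Ici 0) := by
    conv_lhs => rw [← gauss_neg]
    rw [Measure.map_apply measurable_neg measurableSet_Iic]
    congr 1
    ext x
    simp
  have hsum : gaussianReal 0 1 (Set.Iic 0) + m = 1 := by
    rw [hm, ← measure_union (by simp [Set.disjoint_left]) measurableSet_Ioi]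
    rw [Set.Iic_union_Ioi]
    exact measure_univ
  have hle : m ≤ gaussianReal 0 1 (Set.Iic 0) := by
    rw [hIic]; exact measure_mono Set.Ioi_subset_Ici_self
  have h2 : m + m ≤ 1 := le_trans (add_le_add hle le_rfl) (le_of_eq hsum)
  by_contra hc
  push_neg at hc
  have : (1:ℝ≥0∞) < m + m := by
    calc (1:ℝ≥0∞) = ENNReal.ofReal (1/2) + ENNReal.ofReal (1/2) := by
          rw [← ENNReal.ofReal_add (by norm_num) (by norm_num)]; norm_num
      _ < m + m := ENNReal.add_lt_add hc hc
  exact absurd h2 (not_le.mpr this)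

lemma gauss_Iio : gaussianReal 0 1 (Set.Iio 0) ≤ ENNReal.ofReal (1/2) := by
  have h : gaussianReal 0 1 (Set.Iio 0) = gaussianReal 0 1 (Set.Ioi 0) := by
    conv_lhs => rw [← gauss_neg]
    rw [Measure.map_apply measurable_neg measurableSet_Iio]
    congr 1
    ext x
    simp
  rw [h]; exact gauss_Ioi


lemma integ_half : Integrable (fun z : ℝ => z * rexp (-z^2/2)) := by
  have h := integrable_mul_exp_neg_mul_sq (b := 1/2) (by norm_num)
  refine h.congr (Eventually.of_forall fun x => ?_)
  ring_nf

lemma ftc_half : ∫ z in Set.Ioi (0:ℝ), z * rexp (-z^2/2) = 1 := by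
  have hfun : ∀ y : ℝ, -(y^2/2) = -y^2/2 := fun y => (neg_div 2 (y^2)).symm
  have hderiv : ∀ x ∈ Set.Ici (0:ℝ),
      HasDerivAt (fun x : ℝ => -rexp (-x^2/2)) (x * rexp (-x^2/2)) x := by
    intro x _
    have h1 : HasDerivAt (fun y : ℝ => -(y^2/2)) (-((2:ℕ) * x^(2-1)/2)) x :=
      ((hasDerivAt_pow 2 x).div_const 2).neg
    have h1' : HasDerivAt (fun y : ℝ => -(y^2/2)) (-x) x := by
      convert h1 using 1; push_cast; ring
    have h2 := (h1'.exp).neg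
    have h3 : HasDerivAt (fun y : ℝ => -rexp (-(y^2/2))) (x * rexp (-x^2/2)) x := by
      rw [show x * rexp (-x^2/2) = -(rexp (-(x^2/2)) * -x) by rw [hfun]; ring]
      exact h2
    simp_rw [hfun] at h3
    exact h3
  have htend : Tendsto (fun x : ℝ => -rexp (-x^2/2)) atTop (𝓝 0) := by
    have t0 : Tendsto (fun x : ℝ => x^2/2) atTop atTop :=
      (tendsto_pow_atTop (two_ne_zero)).atTop_div_const (by norm_num)
    have t1 : Tendsto (fun x : ℝ => -(x^2/2)) atTop atBot :=
      tendsto_neg_atTop_atBot.comp t0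
    simp_rw [hfun] at t1
    have t2 : Tendsto (fun x : ℝ => -rexp (-x^2/2)) atTop (𝓝 (-0)) :=
      (Real.tendsto_exp_atBot.comp t1).neg
    rwa [neg_zero] at t2
  have := integral_Ioi_of_hasDerivAt_of_tendsto' (a := 0)
    (fun x hx => hderiv x hx) integ_half.integrableOn htend
  rw [this]
  norm_num

lemma halfnorm : ∫⁻ z, ENNReal.ofReal (max z 0) ∂(gaussianReal 0 1) ≤ 1 := by
  rw [gaussianReal_of_var_ne_zero 0 one_ne_zero,
    lintegral_withDensity_eq_lintegral_mul _ (measurable_gaussianPDF 0 1)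
      ((measurable_id'.max measurable_const).ennreal_ofReal)]
  have hpt : ∀ z : ℝ, (gaussianPDF 0 1 * fun z => ENNReal.ofReal (max z 0)) z
      ≤ Set.indicator (Set.Ioi 0) (fun z => ENNReal.ofReal (z * rexp (-z^2/2))) z := by
    intro z
    simp only [Pi.mul_apply, gaussianPDF]
    rw [← ENNReal.ofReal_mul (gaussianPDFReal_nonneg 0 1 z)]
    by_cases hz : 0 < z
    · rw [Set.indicator_of_mem (show z ∈ Set.Ioi 0 from hz)]
      apply ENNReal.ofReal_le_ofReal
      rw [max_eq_left hz.le, gaussianPDFReal]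
      have h1 : (Real.sqrt (2 * π * ((1:ℝ≥0):ℝ)))⁻¹ ≤ 1 := by
        rw [show (((1:ℝ≥0)):ℝ) = 1 by norm_num, mul_one]
        apply inv_le_one_of_one_le₀
        rw [show (1:ℝ) = Real.sqrt 1 by simp]
        exact Real.sqrt_le_sqrt (by nlinarith [Real.pi_gt_three])
      have h2 : rexp (-(z - 0)^2 / (2 * ((1:ℝ≥0):ℝ))) = rexp (-z^2/2) := by
        norm_num
      rw [h2]
      nlinarith [mul_nonneg hz.le (Real.exp_pos (-z^2/2)).le, h1,
        (Real.exp_pos (-z^2/2)).le, hz.le,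
        inv_nonneg.mpr (Real.sqrt_nonneg (2 * π * ((1:ℝ≥0):ℝ)))]
    · rw [Set.indicator_of_notMem (show z ∉ Set.Ioi 0 from hz)]
      have : max z 0 = 0 := max_eq_right (not_lt.mp hz)
      simp [this]
  calc ∫⁻ z, (gaussianPDF 0 1 * fun z => ENNReal.ofReal (max z 0)) z
      ≤ ∫⁻ z, Set.indicator (Set.Ioi 0) (fun z => ENNReal.ofReal (z * rexp (-z^2/2))) z :=
        lintegral_mono hpt
    _ = ∫⁻ z in Set.Ioi 0, ENNReal.ofReal (z * rexp (-z^2/2)) :=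
        lintegral_indicator measurableSet_Ioi _
    _ = ENNReal.ofReal (∫ z in Set.Ioi (0:ℝ), z * rexp (-z^2/2)) := by
        rw [ofReal_integral_eq_lintegral_ofReal integ_half.integrableOn]
        filter_upwards [ae_restrict_mem measurableSet_Ioi] with z hz
        exact mul_nonneg (le_of_lt hz) (Real.exp_pos _).le
    _ = 1 := by rw [ftc_half]; norm_num




lemma core (ρ c : ℝ) (hρ0 : 0 < ρ) (hρ1 : ρ ≤ 1) :
    ((gaussianReal 0 1).prod (gaussianReal 0 1))
      {q : ℝ × ℝ | q.1 ≤ c ∧ c < ρ * q.1 + Real.sqrt (1 - ρ ^ 2) * q.2} ≤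
    ENNReal.ofReal (Real.sqrt (1 - ρ ^ 2) + |c| * (1 - ρ) / ρ) := by
  set s := Real.sqrt (1 - ρ^2) with hs
  have hs0 : 0 ≤ s := Real.sqrt_nonneg _
  have hterm : 0 ≤ |c| * (1 - ρ) / ρ := by
    apply div_nonneg _ hρ0.le
    exact mul_nonneg (abs_nonneg c) (by linarith)
  by_cases hcase : ρ^2 ≤ 3/4
  · have hshalf : (1/2 : ℝ) ≤ s := by
      rw [hs, show (1/2:ℝ) = Real.sqrt (1/4) by
        rw [show (1/4:ℝ) = (1/2)^2 by norm_num, Real.sqrt_sq (by norm_num)]]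
      exact Real.sqrt_le_sqrt (by nlinarith)
    have hspos : 0 < s := lt_of_lt_of_le (by norm_num) hshalf
    have hbound : ENNReal.ofReal (1/2) ≤ ENNReal.ofReal (s + |c| * (1 - ρ) / ρ) :=
      ENNReal.ofReal_le_ofReal (by linarith)
    refine le_trans ?_ hbound
    by_cases hc : 0 ≤ c
    · have hsub : {q : ℝ × ℝ | q.1 ≤ c ∧ c < ρ * q.1 + s * q.2} ⊆
          (Set.univ ×ˢ Set.Ioi (0:ℝ)) := by
        rintro ⟨x, z⟩ ⟨h1, h2⟩
        refine ⟨trivial, ?_⟩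
        have hsz : 0 < s * z := by nlinarith
        rcases mul_pos_iff.mp hsz with ⟨_, hz⟩ | ⟨hneg, _⟩
        · exact hz
        · linarith
      calc ((gaussianReal 0 1).prod (gaussianReal 0 1))
            {q : ℝ × ℝ | q.1 ≤ c ∧ c < ρ * q.1 + s * q.2}
          ≤ ((gaussianReal 0 1).prod (gaussianReal 0 1)) (Set.univ ×ˢ Set.Ioi 0) :=
            measure_mono hsub
        _ = gaussianReal 0 1 Set.univ * gaussianReal 0 1 (Set.Ioi 0) :=
            Measure.prod_prod _ _
        _ ≤ 1 * ENNReal.ofReal (1/2) := by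
            rw [measure_univ]
            exact mul_le_mul_right gauss_Ioi _
        _ = ENNReal.ofReal (1/2) := one_mul _
    · push_neg at hc
      have hsub : {q : ℝ × ℝ | q.1 ≤ c ∧ c < ρ * q.1 + s * q.2} ⊆
          (Set.Iio (0:ℝ) ×ˢ Set.univ) := by
        rintro ⟨x, z⟩ ⟨h1, _⟩
        exact ⟨lt_of_le_of_lt h1 hc, trivial⟩
      calc ((gaussianReal 0 1).prod (gaussianReal 0 1))
            {q : ℝ × ℝ | q.1 ≤ c ∧ c < ρ * q.1 + s * q.2}
          ≤ ((gaussianReal 0 1).prod (gaussianReal 0 1)) (Set.Iio 0 ×ˢ Set.univ) :=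
            measure_mono hsub
        _ = gaussianReal 0 1 (Set.Iio 0) * gaussianReal 0 1 Set.univ :=
            Measure.prod_prod _ _
        _ ≤ ENNReal.ofReal (1/2) * 1 := by
            rw [measure_univ]
            exact mul_le_mul_left gauss_Iio _
        _ = ENNReal.ofReal (1/2) := mul_one _
  · push_neg at hcase
    have hρhalf : 1/2 < ρ := by nlinarith
    have hsub : {q : ℝ × ℝ | q.1 ≤ c ∧ c < ρ * q.1 + s * q.2} ⊆
        {q : ℝ × ℝ | (c - s * q.2)/ρ < q.1 ∧ q.1 ≤ c} := by
      rintro ⟨x, z⟩ ⟨h1, h2⟩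
      refine ⟨?_, h1⟩
      rw [div_lt_iff₀ hρ0]
      nlinarith
    have hmeasD : MeasurableSet {q : ℝ × ℝ | (c - s * q.2)/ρ < q.1 ∧ q.1 ≤ c} := by
      have m1 : Measurable fun q : ℝ × ℝ => (c - s * q.2)/ρ :=
        (measurable_const.sub (measurable_snd.const_mul s)).div_const ρ
      exact (measurableSet_lt m1 measurable_fst).inter
        (measurableSet_le measurable_fst measurable_const)
    have hpre : ∀ z : ℝ, ((fun x => (x, z)) ⁻¹' {q : ℝ × ℝ | (c - s * q.2)/ρ < q.1 ∧ q.1 ≤ c})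
        = Set.Ioc ((c - s * z)/ρ) c := by
      intro z; ext x; simp [Set.mem_Ioc]
    have hpt2 : ∀ z : ℝ, ENNReal.ofReal ((c - (c - s * z)/ρ)/2) ≤
        ENNReal.ofReal (|c| * (1-ρ)/(2*ρ)) + ENNReal.ofReal (s/(2*ρ)) * ENNReal.ofReal (max z 0) := by
      intro z
      have hA : 0 ≤ |c| * (1-ρ)/(2*ρ) :=
        div_nonneg (mul_nonneg (abs_nonneg c) (by linarith)) (by linarith)
      have hB : 0 ≤ s/(2*ρ) := div_nonneg hs0 (by linarith)
      rw [← ENNReal.ofReal_mul hB, ← ENNReal.ofReal_add hA (mul_nonneg hB (le_max_right z 0))]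
      apply ENNReal.ofReal_le_ofReal
      have h1 : c * (ρ - 1) ≤ |c| * (1 - ρ) := by
        calc c * (ρ - 1) ≤ |c * (ρ - 1)| := le_abs_self _
          _ = |c| * (1 - ρ) := by
              rw [abs_mul, abs_of_nonpos (show ρ - 1 ≤ 0 by linarith)]; ring
      have h2 : s * z ≤ s * max z 0 := mul_le_mul_of_nonneg_left (le_max_left _ _) hs0
      have heq : (c - (c - s * z)/ρ)/2 = (c * (ρ - 1) + s * z)/(2*ρ) := by
        field_simp; ring
      have heq2 : |c| * (1-ρ)/(2*ρ) + s/(2*ρ) * max z 0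
          = (|c| * (1-ρ) + s * max z 0)/(2*ρ) := by ring
      rw [heq, heq2]
      exact (div_le_div_iff_of_pos_right (by positivity)).mpr (by linarith)
    have hmeasmax : Measurable fun z : ℝ => ENNReal.ofReal (max z 0) :=
      (measurable_id'.max measurable_const).ennreal_ofReal
    calc ((gaussianReal 0 1).prod (gaussianReal 0 1))
          {q : ℝ × ℝ | q.1 ≤ c ∧ c < ρ * q.1 + s * q.2}
        ≤ ((gaussianReal 0 1).prod (gaussianReal 0 1))
          {q : ℝ × ℝ | (c - s * q.2)/ρ < q.1 ∧ q.1 ≤ c} := measure_mono hsub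
      _ = ∫⁻ z, gaussianReal 0 1 ((fun x => (x, z)) ⁻¹' {q : ℝ × ℝ | (c - s * q.2)/ρ < q.1 ∧ q.1 ≤ c})
            ∂(gaussianReal 0 1) := Measure.prod_apply_symm hmeasD
      _ ≤ ∫⁻ z, ENNReal.ofReal ((c - (c - s * z)/ρ)/2) ∂(gaussianReal 0 1) := by
          apply lintegral_mono
          intro z
          refine le_trans (le_of_eq ?_) (gauss_Ioc ((c - s * z)/ρ) c)
          exact congrArg (gaussianReal 0 1) (hpre z)
      _ ≤ ∫⁻ z, (ENNReal.ofReal (|c| * (1-ρ)/(2*ρ))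
            + ENNReal.ofReal (s/(2*ρ)) * ENNReal.ofReal (max z 0)) ∂(gaussianReal 0 1) :=
          lintegral_mono fun z => hpt2 z
      _ = ENNReal.ofReal (|c| * (1-ρ)/(2*ρ)) * 1
            + ENNReal.ofReal (s/(2*ρ)) * ∫⁻ z, ENNReal.ofReal (max z 0) ∂(gaussianReal 0 1) := by
          rw [lintegral_add_left measurable_const, lintegral_const, measure_univ,
            lintegral_const_mul _ hmeasmax]
      _ ≤ ENNReal.ofReal (|c| * (1-ρ)/(2*ρ)) * 1 + ENNReal.ofReal (s/(2*ρ)) * 1 := by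
          exact add_le_add_right (mul_le_mul_right halfnorm _) _
      _ = ENNReal.ofReal (|c| * (1-ρ)/(2*ρ) + s/(2*ρ)) := by
          rw [mul_one, mul_one, ← ENNReal.ofReal_add
            (div_nonneg (mul_nonneg (abs_nonneg c) (by linarith)) (by linarith))
            (div_nonneg hs0 (by linarith))]
      _ ≤ ENNReal.ofReal (s + |c| * (1 - ρ) / ρ) := by
          apply ENNReal.ofReal_le_ofReal
          have e1 : s/(2*ρ) ≤ s := div_le_self hs0 (by linarith)
          have e2 : |c| * (1-ρ)/(2*ρ) ≤ |c| * (1-ρ)/ρ := by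
            apply div_le_div_of_nonneg_left
              (mul_nonneg (abs_nonneg c) (by linarith)) hρ0 (by linarith)
          linarith




lemma main1 (ρ a b : ℝ) (hρ0 : 0 < ρ) (hρ1 : ρ ≤ 1) :
    ((gaussianReal 0 1).prod (gaussianReal 0 1))
        {q : ℝ × ℝ | q.1 ≤ a ∧ b < ρ * q.1 + Real.sqrt (1 - ρ ^ 2) * q.2} ≤
      ENNReal.ofReal (Real.sqrt (1 - ρ ^ 2) + |a| * (1 - ρ) / ρ + |b - a| / ρ) := by
  set s := Real.sqrt (1 - ρ^2) with hs
  have hs0 : 0 ≤ s := Real.sqrt_nonneg _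
  have hsub : {q : ℝ × ℝ | q.1 ≤ a ∧ b < ρ * q.1 + s * q.2} ⊆
      {q : ℝ × ℝ | q.1 ≤ b ∧ b < ρ * q.1 + s * q.2}
        ∪ (Set.Ioc (min a b) (max a b) ×ˢ Set.univ) := by
    rintro ⟨x, z⟩ ⟨h1, h2⟩
    by_cases hxb : x ≤ b
    · exact Or.inl ⟨hxb, h2⟩
    · push_neg at hxb
      exact Or.inr ⟨⟨lt_of_le_of_lt (min_le_right a b) hxb, le_trans h1 (le_max_left a b)⟩,
        trivial⟩
  have hI : ((gaussianReal 0 1).prod (gaussianReal 0 1))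
      (Set.Ioc (min a b) (max a b) ×ˢ Set.univ) ≤ ENNReal.ofReal (|b - a| / 2) := by
    rw [Measure.prod_prod, measure_univ, mul_one]
    refine le_trans (gauss_Ioc _ _) (le_of_eq ?_)
    congr 1
    rw [max_sub_min_eq_abs, abs_sub_comm]
  calc ((gaussianReal 0 1).prod (gaussianReal 0 1))
        {q : ℝ × ℝ | q.1 ≤ a ∧ b < ρ * q.1 + s * q.2}
      ≤ ((gaussianReal 0 1).prod (gaussianReal 0 1))
          {q : ℝ × ℝ | q.1 ≤ b ∧ b < ρ * q.1 + s * q.2}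
        + ((gaussianReal 0 1).prod (gaussianReal 0 1))
          (Set.Ioc (min a b) (max a b) ×ˢ Set.univ) :=
        le_trans (measure_mono hsub) (measure_union_le _ _)
    _ ≤ ENNReal.ofReal (s + |b| * (1 - ρ) / ρ) + ENNReal.ofReal (|b - a| / 2) :=
        add_le_add (core ρ b hρ0 hρ1) hI
    _ = ENNReal.ofReal (s + |b| * (1 - ρ) / ρ + |b - a| / 2) := by
        rw [← ENNReal.ofReal_add _ (by positivity)]
        have : 0 ≤ |b| * (1 - ρ) / ρ :=
          div_nonneg (mul_nonneg (abs_nonneg b) (by linarith)) hρ0.le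
        linarith
    _ ≤ ENNReal.ofReal (s + |a| * (1 - ρ) / ρ + |b - a| / ρ) := by
        apply ENNReal.ofReal_le_ofReal
        have hb : |b| ≤ |a| + |b - a| := by
          calc |b| = |a + (b - a)| := by ring_nf
            _ ≤ |a| + |b - a| := abs_add_le _ _
        have h2 : |b| * (1 - ρ) / ρ ≤ |a| * (1 - ρ) / ρ + |b - a| * (1 - ρ) / ρ := by
          rw [← add_div, ← add_mul]
          exact div_le_div_of_nonneg_right
            (mul_le_mul_of_nonneg_right hb (by linarith)) hρ0.le
        have e : |b - a| * (1 - ρ) / ρ = |b - a| / ρ - |b - a| := by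
          field_simp
        have h3 : |b - a| / 2 ≤ |b - a| := by
          have := abs_nonneg (b - a); linarith
        linarith




lemma main2 (ρ a b : ℝ) (hρ0 : 0 < ρ) (hρ1 : ρ ≤ 1) :
    ((gaussianReal 0 1).prod (gaussianReal 0 1))
        {q : ℝ × ℝ | a < q.1 ∧ ρ * q.1 + Real.sqrt (1 - ρ ^ 2) * q.2 ≤ b} ≤
      ENNReal.ofReal (Real.sqrt (1 - ρ ^ 2) + |a| * (1 - ρ) / ρ + |b - a| / ρ) := by
  set s := Real.sqrt (1 - ρ^2) with hs
  set μ := gaussianReal 0 1 with hμ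
  have hs0 : 0 ≤ s := Real.sqrt_nonneg _
  have hmeas2 : MeasurableSet {q : ℝ × ℝ | a < q.1 ∧ ρ * q.1 + s * q.2 ≤ b} :=
    (measurableSet_lt measurable_const measurable_fst).inter
      (measurableSet_le ((measurable_fst.const_mul ρ).add (measurable_snd.const_mul s))
        measurable_const)
  have hn : Measurable (fun q : ℝ × ℝ => (-q.1, -q.2)) :=
    (measurable_fst.neg).prodMk (measurable_snd.neg)
  have hmapn : (μ.prod μ).map (fun q : ℝ × ℝ => (-q.1, -q.2)) = μ.prod μ := by
    have he : (fun q : ℝ × ℝ => (-q.1, -q.2)) = Prod.map (fun x : ℝ => -x) (fun x : ℝ => -x) :=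
      rfl
    rw [he, ← Measure.map_prod_map _ _ measurable_neg measurable_neg, hμ, gauss_neg]
  have h1 : (μ.prod μ) {q : ℝ × ℝ | a < q.1 ∧ ρ * q.1 + s * q.2 ≤ b}
      = (μ.prod μ) ((fun q : ℝ × ℝ => (-q.1, -q.2)) ⁻¹'
          {q : ℝ × ℝ | a < q.1 ∧ ρ * q.1 + s * q.2 ≤ b}) := by
    conv_lhs => rw [← hmapn]
    rw [Measure.map_apply hn hmeas2]
  have hsub : ((fun q : ℝ × ℝ => (-q.1, -q.2)) ⁻¹'
        {q : ℝ × ℝ | a < q.1 ∧ ρ * q.1 + s * q.2 ≤ b}) ⊆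
      {q : ℝ × ℝ | q.1 ≤ -a ∧ -b < ρ * q.1 + s * q.2}
        ∪ {q : ℝ × ℝ | ρ * q.1 + s * q.2 = -b} := by
    rintro ⟨x, z⟩ ⟨h2, h3⟩
    simp only [Set.mem_setOf_eq] at h2 h3 ⊢
    have h4 : -b ≤ ρ * x + s * z := by nlinarith
    rcases eq_or_lt_of_le h4 with heq | hlt
    · exact Or.inr heq.symm
    · exact Or.inl ⟨by linarith, hlt⟩
  have hB : (μ.prod μ) {q : ℝ × ℝ | ρ * q.1 + s * q.2 = -b} = 0 := by
    have hpt : ∀ p : ℝ, μ {p} = 0 := fun p =>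
      gaussianReal_absolutelyContinuous 0 one_ne_zero (volume_singleton)
    by_cases hse : s = 0
    · have hre : {q : ℝ × ℝ | ρ * q.1 + s * q.2 = -b} = {-b/ρ} ×ˢ Set.univ := by
        ext ⟨x, z⟩
        simp only [hse, zero_mul, add_zero, Set.mem_setOf_eq, Set.mem_prod, Set.mem_singleton_iff,
          Set.mem_univ, and_true]
        rw [eq_div_iff hρ0.ne', mul_comm]
      rw [hre, Measure.prod_prod, hpt, zero_mul]
    · have hmeasB : MeasurableSet {q : ℝ × ℝ | ρ * q.1 + s * q.2 = -b} :=
        measurableSet_eq_fun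
          ((measurable_fst.const_mul ρ).add (measurable_snd.const_mul s)) measurable_const
      rw [Measure.prod_apply hmeasB]
      have hslice : ∀ x : ℝ, (Prod.mk x ⁻¹' {q : ℝ × ℝ | ρ * q.1 + s * q.2 = -b})
          = {(-b - ρ * x)/s} := by
        intro x
        ext z
        simp only [Set.mem_preimage, Set.mem_setOf_eq, Set.mem_singleton_iff]
        rw [eq_div_iff hse, mul_comm]
        constructor <;> intro h <;> linarith
      have : ∀ x : ℝ, μ (Prod.mk x ⁻¹' {q : ℝ × ℝ | ρ * q.1 + s * q.2 = -b}) = 0 := by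
        intro x; rw [hslice x]; exact hpt _
      calc ∫⁻ x, μ (Prod.mk x ⁻¹' {q : ℝ × ℝ | ρ * q.1 + s * q.2 = -b}) ∂μ
          = ∫⁻ _, (0:ℝ≥0∞) ∂μ := lintegral_congr this
        _ = 0 := lintegral_zero
  calc (μ.prod μ) {q : ℝ × ℝ | a < q.1 ∧ ρ * q.1 + s * q.2 ≤ b}
      = (μ.prod μ) ((fun q : ℝ × ℝ => (-q.1, -q.2)) ⁻¹'
          {q : ℝ × ℝ | a < q.1 ∧ ρ * q.1 + s * q.2 ≤ b}) := h1
    _ ≤ (μ.prod μ) {q : ℝ × ℝ | q.1 ≤ -a ∧ -b < ρ * q.1 + s * q.2}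
        + (μ.prod μ) {q : ℝ × ℝ | ρ * q.1 + s * q.2 = -b} :=
        le_trans (measure_mono hsub) (measure_union_le _ _)
    _ = (μ.prod μ) {q : ℝ × ℝ | q.1 ≤ -a ∧ -b < ρ * q.1 + s * q.2} := by rw [hB, add_zero]
    _ ≤ ENNReal.ofReal (s + |(-a)| * (1 - ρ) / ρ + |(-b) - (-a)| / ρ) := main1 ρ (-a) (-b) hρ0 hρ1
    _ = ENNReal.ofReal (s + |a| * (1 - ρ) / ρ + |b - a| / ρ) := by
        rw [abs_neg, show (-b) - (-a) = a - b by ring, abs_sub_comm]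

/-- Let `ρ ∈ (0, 1]`, `a b : ℝ`, and let `X, Z` be independent standard
Gaussians. Then `P(X ≤ a ∧ ρX + √(1−ρ²)Z > b) ≤ √(1−ρ²) + |a|(1−ρ)/ρ + |b−a|/ρ`,
and the same bound holds for `P(X > a ∧ ρX + √(1−ρ²)Z ≤ b)`. -/
theorem correlated_gaussian_threshold_bound
    (ρ a b : ℝ) (hρ0 : 0 < ρ) (hρ1 : ρ ≤ 1) :
    ((gaussianReal 0 1).prod (gaussianReal 0 1))
        {q : ℝ × ℝ | q.1 ≤ a ∧ b < ρ * q.1 + Real.sqrt (1 - ρ ^ 2) * q.2} ≤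
      ENNReal.ofReal (Real.sqrt (1 - ρ ^ 2) + |a| * (1 - ρ) / ρ + |b - a| / ρ) ∧
    ((gaussianReal 0 1).prod (gaussianReal 0 1))
        {q : ℝ × ℝ | a < q.1 ∧ ρ * q.1 + Real.sqrt (1 - ρ ^ 2) * q.2 ≤ b} ≤
      ENNReal.ofReal (Real.sqrt (1 - ρ ^ 2) + |a| * (1 - ρ) / ρ + |b - a| / ρ) :=
  ⟨main1 ρ a b hρ0 hρ1, main2 ρ a b hρ0 hρ1⟩
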